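/- arXiv:2412.01952 — 2 statements merged into one kernel-verified Lean document; each statement's English description precedes it below -/
import Mathlib

section
/- There exists a universal constant C > 0 with the following property. For all integers n ≥ 3 and M ≥ 1, all 0 < α < 1/2, and all 0 < δ < (1/2) min(1, C α² / √M), the total variation distance between μ_M and ν_{M,δ} satisfies ‖μ_M − ν_{M,δ}‖_TV ≤ α. -/
open MeasureTheory

/-- Total variation distance between two measures:
`‖μ − ν‖_TV = sup_{A measurable} |μ(A) − ν(A)|`. -/
noncomputable def tvDist {Ω : Type*} [MeasurableSpace Ω] (μ ν : Measure Ω) : ℝ :=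
  ⨆ A : {A : Set Ω // MeasurableSet A}, |(μ A.1).toReal - (ν A.1).toReal|

/-- The uniform probability measure on a finset of `Fin n`. -/
noncomputable def unifOn {n : ℕ} (t : Finset (Fin n)) : Measure (Fin n) :=
  (t.card : ENNReal)⁻¹ • ∑ i ∈ t, Measure.dirac i

/-- The uniform distribution on `{1,…,n}` (represented as `Fin n`). -/
noncomputable def muCoord (n : ℕ) : Measure (Fin n) := unifOn Finset.univ

/-- The indices `{s,…,n}` with `s = ⌈n/2⌉`, in the `Fin n` representation
(where `i : Fin n` stands for the index `i+1 ∈ {1,…,n}`). -/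
def topHalf (n : ℕ) : Finset (Fin n) :=
  Finset.univ.filter fun i => (n + 1) / 2 ≤ i.1 + 1

/-- The perturbed coordinate distribution: with probability `1 − δ` a uniform
draw from `{1,…,n}`, with probability `δ` a uniform draw from `{⌈n/2⌉,…,n}`. -/
noncomputable def nuCoord (n : ℕ) (δ : ℝ) : Measure (Fin n) :=
  ENNReal.ofReal (1 - δ) • muCoord n + ENNReal.ofReal δ • unifOn (topHalf n)

/-- `μ_M`: the law of a vector of `M` i.i.d. coordinates uniform on `{1,…,n}`. -/
noncomputable def muVec (n M : ℕ) : Measure (Fin M → Fin n) :=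
  Measure.pi fun _ => muCoord n

/-- `ν_{M,δ}`: the law of a vector of `M` i.i.d. coordinates, each distributed
according to the perturbed coordinate distribution `nuCoord n δ`. -/
noncomputable def nuVec (n M : ℕ) (δ : ℝ) : Measure (Fin M → Fin n) :=
  Measure.pi fun _ => nuCoord n δ

/- ---------- auxiliary lemmas ---------- -/

lemma measure_eq_sum_singletons {Ω : Type*} [Fintype Ω] [MeasurableSpace Ω]
    [MeasurableSingletonClass Ω] (μ : Measure Ω) (A : Set Ω) :
    μ A = ∑ x ∈ (Set.toFinite A).toFinset, μ {x} := by
  classical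
  conv_lhs => rw [show A = ⋃ x ∈ (Set.toFinite A).toFinset, {x} by
    ext y; simp]
  rw [measure_biUnion_finset]
  · intro x _ y _ hxy
    simp [Set.disjoint_singleton, hxy]
  · exact fun x _ => measurableSet_singleton x

lemma unifOn_singleton {n : ℕ} (t : Finset (Fin n)) (j : Fin n) :
    unifOn t {j} = (t.card : ENNReal)⁻¹ * (if j ∈ t then 1 else 0) := by
  classical
  simp only [unifOn, Measure.smul_apply, Measure.finset_sum_apply, smul_eq_mul]
  congr 1
  have : ∀ i : Fin n, Measure.dirac i ({j} : Set (Fin n)) = if i = j then 1 else 0 := by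
    intro i
    by_cases h : i = j
    · simp [h]
    · rw [Measure.dirac_apply' _ (measurableSet_singleton j)]
      simp [Set.indicator, h]
  simp_rw [this]
  rw [Finset.sum_ite_eq' t j (fun _ => 1)]

lemma muCoord_singleton {n : ℕ} (hn : 0 < n) (j : Fin n) :
    muCoord n {j} = ((n : ENNReal))⁻¹ := by
  rw [muCoord, unifOn_singleton]
  simp

lemma topHalf_card_bounds {n : ℕ} (hn : 3 ≤ n) :
    1 ≤ (topHalf n).card ∧ n ≤ 2 * (topHalf n).card := by
  classical
  have h1 : 1 ≤ (topHalf n).card := by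
    refine Finset.card_pos.mpr ⟨⟨n - 1, by omega⟩, ?_⟩
    simp only [topHalf, Finset.mem_filter, Finset.mem_univ, true_and]
    omega
  refine ⟨h1, ?_⟩
  have hsplit : (topHalf n).card
      + (Finset.univ.filter fun i : Fin n => ¬ ((n + 1) / 2 ≤ i.1 + 1)).card = n := by
    rw [topHalf, Finset.card_filter_add_card_filter_not]
    simp
  have hle : (Finset.univ.filter fun i : Fin n => ¬ ((n + 1) / 2 ≤ i.1 + 1)).card
      ≤ (topHalf n).card := by
    refine Finset.card_le_card_of_injOn (fun i => ⟨n - 1 - i.1, by omega⟩) ?_ ?_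
    · intro i hi
      simp only [Finset.mem_coe, Finset.mem_filter, Finset.mem_univ, true_and] at hi
      simp only [Finset.mem_coe, topHalf, Finset.mem_filter, Finset.mem_univ, true_and]
      have := i.2
      omega
    · intro i hi j hj hij
      simp only [Fin.mk.injEq] at hij
      have hi2 := i.2
      have hj2 := j.2
      ext
      omega
  omega

lemma pow_one_add_le_aux {y : ℝ} (hy : 0 ≤ y) :
    ∀ M : ℕ, (M : ℝ) * y ≤ 1 / 2 → (1 + y) ^ M ≤ 1 + 2 * M * y := by
  intro M
  induction M with
  | zero => simp
  | succ k ih =>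
    intro h
    have hcast : ((k + 1 : ℕ) : ℝ) = (k : ℝ) + 1 := by push_cast; ring
    rw [hcast] at h
    have hk : (k : ℝ) * y ≤ 1 / 2 := by nlinarith
    have ihk := ih hk
    have hky : 2 * (k : ℝ) * y ≤ 1 := by linarith
    calc (1 + y) ^ (k + 1) = (1 + y) ^ k * (1 + y) := by rw [pow_succ]
      _ ≤ (1 + 2 * k * y) * (1 + y) := by
          have h1 : (0 : ℝ) ≤ 1 + y := by linarith
          exact mul_le_mul_of_nonneg_right ihk h1
      _ ≤ 1 + 2 * ((k : ℕ) + 1 : ℝ) * y := by nlinarith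
      _ = 1 + 2 * ((k + 1 : ℕ) : ℝ) * y := by rw [hcast]

set_option maxHeartbeats 2000000 in
/-- **Lemma 2 of the paper.**  There is a universal constant `C > 0` such that
for all `n ≥ 3`, `M ≥ 1`, `0 < α < 1/2` and `0 < δ < (1/2) min(1, C α² / √M)`,
the total variation distance between `μ_M` and `ν_{M,δ}` is at most `α`. -/
theorem tv_muVec_nuVec_le :
    ∃ C : ℝ, 0 < C ∧ ∀ n M : ℕ, 3 ≤ n → 1 ≤ M →
      ∀ α : ℝ, 0 < α → α < 1 / 2 →
      ∀ δ : ℝ, 0 < δ → δ < (1 / 2) * min 1 (C * α ^ 2 / Real.sqrt M) →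
      tvDist (muVec n M) (nuVec n M δ) ≤ α := by
  classical
  refine ⟨1, one_pos, ?_⟩
  intro n M hn hM α hα hα2 δ hδ hδlt
  -- basic numerics
  have hn0 : 0 < n := by omega
  have hN0 : (0 : ℝ) < n := by exact_mod_cast hn0
  have hM0 : (0 : ℝ) < M := by exact_mod_cast hM
  have hsqrtM : (0 : ℝ) < Real.sqrt M := Real.sqrt_pos.mpr hM0
  have hδhalf : δ < 1 / 2 := by
    have h1 : (1 : ℝ) / 2 * min 1 (1 * α ^ 2 / Real.sqrt M) ≤ 1 / 2 * 1 := by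
      have := min_le_left (1 : ℝ) (1 * α ^ 2 / Real.sqrt M)
      linarith
    calc δ < 1 / 2 * min 1 (1 * α ^ 2 / Real.sqrt M) := hδlt
      _ ≤ 1 / 2 * 1 := h1
      _ = 1 / 2 := by norm_num
  have hδ1 : δ ≤ 1 := by linarith
  have hδs : δ ≤ α ^ 2 / (2 * Real.sqrt M) := by
    have h2 := min_le_right (1 : ℝ) (1 * α ^ 2 / Real.sqrt M)
    have hstep : (1 / 2 : ℝ) * min 1 (1 * α ^ 2 / Real.sqrt M)
        ≤ (1 / 2) * (1 * α ^ 2 / Real.sqrt M) := by linarith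
    calc δ ≤ (1 / 2) * (1 * α ^ 2 / Real.sqrt M) := le_trans hδlt.le hstep
      _ = α ^ 2 / (2 * Real.sqrt M) := by ring
  have hMδ2 : (M : ℝ) * δ ^ 2 ≤ α ^ 4 / 4 := by
    have h1 : δ ^ 2 ≤ (α ^ 2 / (2 * Real.sqrt M)) ^ 2 := by nlinarith
    have h2 : (Real.sqrt M) ^ 2 = (M : ℝ) := Real.sq_sqrt hM0.le
    have h3 : (α ^ 2 / (2 * Real.sqrt M)) ^ 2 = α ^ 4 / (4 * M) := by
      rw [div_pow, mul_pow, Real.sq_sqrt hM0.le]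
      norm_num
      ring
    rw [h3] at h1
    calc (M : ℝ) * δ ^ 2 ≤ (M : ℝ) * (α ^ 4 / (4 * M)) := by nlinarith
      _ = α ^ 4 / 4 := by field_simp
  -- topHalf cardinality
  obtain ⟨ht1, ht2⟩ := topHalf_card_bounds hn
  set t : ℕ := (topHalf n).card with htdef
  have hT0 : (0 : ℝ) < t := by exact_mod_cast ht1
  have hT2 : (n : ℝ) ≤ 2 * t := by exact_mod_cast ht2
  -- probability measures
  have hmuU : muCoord n Set.univ = 1 := by
    rw [muCoord, unifOn]
    simp only [Measure.smul_apply, Measure.finset_sum_apply, smul_eq_mul]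
    have : ∀ i : Fin n, Measure.dirac i (Set.univ : Set (Fin n)) = 1 := fun i => by simp
    simp_rw [this]
    rw [Finset.sum_const, Finset.card_univ, Fintype.card_fin, nsmul_eq_mul, mul_one]
    rw [ENNReal.inv_mul_cancel (by exact_mod_cast hn0.ne') (ENNReal.natCast_ne_top n)]
  have hunifU : unifOn (topHalf n) Set.univ = 1 := by
    rw [unifOn]
    simp only [Measure.smul_apply, Measure.finset_sum_apply, smul_eq_mul]
    have : ∀ i : Fin n, Measure.dirac i (Set.univ : Set (Fin n)) = 1 := fun i => by simp
    simp_rw [this]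
    rw [Finset.sum_const, nsmul_eq_mul, mul_one]
    rw [ENNReal.inv_mul_cancel (Nat.cast_ne_zero.mpr (by omega)) (ENNReal.natCast_ne_top t)]
  haveI hmuprob : IsProbabilityMeasure (muCoord n) := ⟨hmuU⟩
  haveI hnuprob : IsProbabilityMeasure (nuCoord n δ) := by
    constructor
    rw [nuCoord, Measure.add_apply, Measure.smul_apply, Measure.smul_apply, hmuU, hunifU,
      smul_eq_mul, smul_eq_mul, mul_one, mul_one,
      ← ENNReal.ofReal_add (by linarith) hδ.le]
    norm_num
  haveI : IsProbabilityMeasure (muVec n M) := by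
    rw [muVec]; infer_instance
  haveI : IsProbabilityMeasure (nuVec n M δ) := by
    rw [nuVec]; infer_instance
  -- coordinate densities
  set v : Fin n → ℝ := fun j => ((nuCoord n δ) {j}).toReal with hvdef
  have hnu_singleton : ∀ j : Fin n,
      nuCoord n δ {j} = ENNReal.ofReal (1 - δ) * ((n : ENNReal))⁻¹
        + ENNReal.ofReal δ * (((t : ENNReal))⁻¹ * (if j ∈ topHalf n then 1 else 0)) := by
    intro j
    rw [nuCoord, Measure.add_apply, Measure.smul_apply, Measure.smul_apply,
      muCoord_singleton hn0, unifOn_singleton, smul_eq_mul, smul_eq_mul, htdef]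
  have hv : ∀ j : Fin n, v j = (1 - δ) / n + (if j ∈ topHalf n then δ / t else 0) := by
    intro j
    rw [hvdef]
    simp only []
    rw [hnu_singleton j]
    have hne1 : ENNReal.ofReal (1 - δ) * ((n : ENNReal))⁻¹ ≠ ⊤ :=
      ENNReal.mul_ne_top ENNReal.ofReal_ne_top
        (ENNReal.inv_ne_top.mpr (Nat.cast_ne_zero.mpr hn0.ne'))
    have hne2 : ENNReal.ofReal δ * (((t : ENNReal))⁻¹ * (if j ∈ topHalf n then 1 else 0)) ≠ ⊤ := by
      refine ENNReal.mul_ne_top ENNReal.ofReal_ne_top (ENNReal.mul_ne_top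
        (ENNReal.inv_ne_top.mpr (Nat.cast_ne_zero.mpr (by omega))) ?_)
      split <;> simp
    rw [ENNReal.toReal_add hne1 hne2]
    rw [ENNReal.toReal_mul, ENNReal.toReal_mul, ENNReal.toReal_mul]
    rw [ENNReal.toReal_ofReal (by linarith), ENNReal.toReal_ofReal hδ.le,
      ENNReal.toReal_inv, ENNReal.toReal_inv]
    simp only [ENNReal.toReal_natCast]
    by_cases h : j ∈ topHalf n <;> simp [h, div_eq_mul_inv]
  have hv_nonneg : ∀ j, 0 ≤ v j := fun j => ENNReal.toReal_nonneg
  have hvsum : ∑ j, v j = 1 := by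
    simp_rw [hv]
    rw [Finset.sum_add_distrib, Finset.sum_const, Finset.card_univ, Fintype.card_fin,
      Finset.sum_ite_mem, Finset.univ_inter, Finset.sum_const, ← htdef,
      nsmul_eq_mul, nsmul_eq_mul]
    field_simp
    ring
  have hvsq : (n : ℝ) * ∑ j, (v j) ^ 2 ≤ 1 + δ ^ 2 := by
    have hsplit : ∑ j, (v j) ^ 2
        = ∑ j ∈ topHalf n, (v j) ^ 2 + ∑ j ∈ (topHalf n)ᶜ, (v j) ^ 2 :=
      (Finset.sum_add_sum_compl (topHalf n) _).symm
    have htop : ∑ j ∈ topHalf n, (v j) ^ 2 = t * ((1 - δ) / n + δ / t) ^ 2 := by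
      rw [Finset.sum_congr rfl (fun j hj => by rw [hv j, if_pos hj]), Finset.sum_const,
        ← htdef, nsmul_eq_mul]
    have hbot : ∑ j ∈ (topHalf n)ᶜ, (v j) ^ 2 = ((n : ℝ) - t) * ((1 - δ) / n) ^ 2 := by
      rw [Finset.sum_congr rfl (fun j hj => by
        rw [hv j, if_neg (Finset.mem_compl.mp hj), add_zero]), Finset.sum_const,
        Finset.card_compl, Fintype.card_fin, ← htdef, nsmul_eq_mul]
      congr 1
      have : t ≤ n := by
        calc t ≤ Finset.univ.card := Finset.card_le_card (Finset.subset_univ _)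
        _ = n := by rw [Finset.card_univ, Fintype.card_fin]
      push_cast [this]
      ring
    rw [hsplit, htop, hbot]
    have key : (n : ℝ) * ((t : ℝ) * ((1 - δ) / n + δ / t) ^ 2
        + ((n : ℝ) - t) * ((1 - δ) / n) ^ 2) = 1 - δ ^ 2 + (n : ℝ) / t * δ ^ 2 := by
      field_simp
      ring
    rw [key]
    have : (n : ℝ) / t ≤ 2 := by
      rw [div_le_iff₀ hT0]
      linarith
    nlinarith
  -- vector densities
  set N : ℝ := (n : ℝ) with hNdef
  set p : ℝ := (N⁻¹) ^ M with hpdef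
  have hp0 : 0 < p := by positivity
  set Q : (Fin M → Fin n) → ℝ := fun x => ∏ i, v (x i) with hQdef
  have hmu_x : ∀ x : Fin M → Fin n, ((muVec n M) {x}).toReal = p := by
    intro x
    rw [muVec, ← Set.univ_pi_singleton x, Measure.pi_pi]
    rw [ENNReal.toReal_prod]
    rw [Finset.prod_congr rfl (fun i _ => by
      rw [muCoord_singleton hn0, ENNReal.toReal_inv, ENNReal.toReal_natCast])]
    rw [Finset.prod_const, Finset.card_univ, Fintype.card_fin]
  have hnu_x : ∀ x : Fin M → Fin n, ((nuVec n M δ) {x}).toReal = Q x := by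
    intro x
    rw [nuVec, ← Set.univ_pi_singleton x, Measure.pi_pi, ENNReal.toReal_prod]
  have hQ_nonneg : ∀ x, 0 ≤ Q x := fun x =>
    Finset.prod_nonneg fun i _ => hv_nonneg _
  -- sums of Q
  have hQsum : ∑ x : Fin M → Fin n, Q x = 1 := by
    rw [hQdef]
    rw [← Fintype.sum_pow v M, hvsum, one_pow]
  have hQ2sum : ∑ x : Fin M → Fin n, (Q x) ^ 2 = (∑ j, (v j) ^ 2) ^ M := by
    rw [Fintype.sum_pow (fun j => (v j) ^ 2) M]
    apply Finset.sum_congr rfl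
    intro x _
    rw [hQdef]
    rw [← Finset.prod_pow]
  -- the L¹ distance
  set S : ℝ := ∑ x : Fin M → Fin n, |p - Q x| with hSdef
  have hS0 : 0 ≤ S := Finset.sum_nonneg fun x _ => abs_nonneg _
  -- TV ≤ S
  have hTV : tvDist (muVec n M) (nuVec n M δ) ≤ S := by
    haveI : Nonempty {A : Set (Fin M → Fin n) // MeasurableSet A} :=
      ⟨⟨∅, MeasurableSet.empty⟩⟩
    apply ciSup_le
    rintro ⟨A, hA⟩
    have hμA : ((muVec n M) A).toReal
        = ∑ x ∈ (Set.toFinite A).toFinset, ((muVec n M) {x}).toReal := by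
      rw [measure_eq_sum_singletons, ENNReal.toReal_sum (fun x _ => measure_ne_top _ _)]
    have hνA : ((nuVec n M δ) A).toReal
        = ∑ x ∈ (Set.toFinite A).toFinset, ((nuVec n M δ) {x}).toReal := by
      rw [measure_eq_sum_singletons, ENNReal.toReal_sum (fun x _ => measure_ne_top _ _)]
    rw [hμA, hνA, ← Finset.sum_sub_distrib]
    refine (Finset.abs_sum_le_sum_abs _ _).trans ?_
    have hsub : ∑ x ∈ (Set.toFinite A).toFinset,
        |((muVec n M) {x}).toReal - ((nuVec n M δ) {x}).toReal|
        ≤ ∑ x : Fin M → Fin n,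
        |((muVec n M) {x}).toReal - ((nuVec n M δ) {x}).toReal| :=
      Finset.sum_le_sum_of_subset_of_nonneg (Finset.subset_univ _)
        (fun _ _ _ => abs_nonneg _)
    refine hsub.trans_eq ?_
    rw [hSdef]
    exact Finset.sum_congr rfl fun x _ => by rw [hmu_x x, hnu_x x]
  -- Cauchy–Schwarz
  have hcard : (Fintype.card (Fin M → Fin n) : ℝ) = N ^ M := by
    rw [Fintype.card_fun, Fintype.card_fin, Fintype.card_fin]
    push_cast
    ring
  have hCS : S ^ 2 ≤ N ^ M * ∑ x : Fin M → Fin n, (p - Q x) ^ 2 := by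
    have h1 : S ^ 2 ≤ ((Finset.univ : Finset (Fin M → Fin n)).card : ℝ)
        * ∑ x : Fin M → Fin n, |p - Q x| ^ 2 := by
      exact_mod_cast sq_sum_le_card_mul_sum_sq (f := fun x => |p - Q x|)
        (s := (Finset.univ : Finset (Fin M → Fin n)))
    simp_rw [sq_abs] at h1
    rwa [Finset.card_univ, hcard] at h1
  -- compute the second moment
  have hNp : N ^ M * p = 1 := by
    rw [hpdef, ← mul_pow, mul_inv_cancel₀ hN0.ne', one_pow]
  have hsum_sq : N ^ M * ∑ x : Fin M → Fin n, (p - Q x) ^ 2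
      = (N * ∑ j, (v j) ^ 2) ^ M - 1 := by
    have hsum2 : ∑ x : Fin M → Fin n, (p - Q x) ^ 2
        = N ^ M * p ^ 2 - 2 * p + (∑ j, (v j) ^ 2) ^ M := by
      have hexp2 : ∀ x : Fin M → Fin n,
          (p - Q x) ^ 2 = p ^ 2 - 2 * p * Q x + (Q x) ^ 2 := fun x => by ring
      simp_rw [hexp2]
      rw [Finset.sum_add_distrib, Finset.sum_sub_distrib, Finset.sum_const,
        Finset.card_univ, nsmul_eq_mul, hcard, ← Finset.mul_sum, hQsum, hQ2sum, mul_one]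
    rw [hsum2, mul_add, mul_sub]
    rw [show N ^ M * (N ^ M * p ^ 2) = (N ^ M * p) * (N ^ M * p) by ring, hNp]
    rw [show N ^ M * (2 * p) = 2 * (N ^ M * p) by ring, hNp]
    rw [← mul_pow]
    ring
  -- final chain
  have hfinal : S ^ 2 ≤ α ^ 2 := by
    have hb1 : (N * ∑ j, (v j) ^ 2) ^ M ≤ (1 + δ ^ 2) ^ M := by
      apply pow_le_pow_left₀ _ hvsq
      positivity
    have hMle : (M : ℝ) * δ ^ 2 ≤ 1 / 2 := by
      have hα2' : α ^ 2 ≤ 1 / 4 := by nlinarith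
      have hα4 : α ^ 4 ≤ 1 / 16 := by nlinarith [sq_nonneg (α ^ 2), sq_nonneg α]
      linarith
    have hb2 : (1 + δ ^ 2) ^ M ≤ 1 + 2 * M * δ ^ 2 :=
      pow_one_add_le_aux (by positivity) M hMle
    have hα4 : α ^ 4 / 2 ≤ α ^ 2 := by
      have h1 : α ^ 2 ≤ 1 / 4 := by nlinarith
      have h2 : α ^ 2 * α ^ 2 ≤ α ^ 2 * (1 / 4) :=
        mul_le_mul_of_nonneg_left h1 (sq_nonneg α)
      nlinarith [sq_nonneg α]
    calc S ^ 2 ≤ N ^ M * ∑ x : Fin M → Fin n, (p - Q x) ^ 2 := hCS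
      _ = (N * ∑ j, (v j) ^ 2) ^ M - 1 := hsum_sq
      _ ≤ (1 + δ ^ 2) ^ M - 1 := by linarith
      _ ≤ 2 * M * δ ^ 2 := by linarith
      _ ≤ α ^ 4 / 2 := by linarith
      _ ≤ α ^ 2 := hα4
  have hSα : S ≤ α := by
    nlinarith
  exact hTV.trans hSα
end

section
/- Let P = N(μ_P, σ²) and Q = N(μ_Q, σ²) be Gaussian distributions on ℝ with the same variance σ² > 0 and distinct means. Then ‖P − Q‖_TV ≥ (μ_P − μ_Q)² / (4σ² + (μ_P − μ_Q)²). -/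
open MeasureTheory ProbabilityTheory Real Set Filter

namespace TVGaussAux

lemma tv_symm {Ω : Type*} [MeasurableSpace Ω] (μ ν : Measure Ω) :
    tvDist μ ν = tvDist ν μ := by
  unfold tvDist
  congr 1
  funext A
  exact abs_sub_comm _ _

lemma tv_bdd (P Q : Measure ℝ) [IsProbabilityMeasure P] [IsProbabilityMeasure Q] :
    BddAbove (Set.range fun A : {A : Set ℝ // MeasurableSet A} =>
      |(P A.1).toReal - (Q A.1).toReal|) := by
  refine ⟨2, ?_⟩
  rintro x ⟨A, rfl⟩
  have h1 : (P A.1).toReal ≤ 1 := by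
    have := ENNReal.toReal_mono (by simp) (prob_le_one (μ := P) (s := A.1))
    simpa using this
  have h2 : (Q A.1).toReal ≤ 1 := by
    have := ENNReal.toReal_mono (by simp) (prob_le_one (μ := Q) (s := A.1))
    simpa using this
  have h3 : (0:ℝ) ≤ (P A.1).toReal := ENNReal.toReal_nonneg
  have h4 : (0:ℝ) ≤ (Q A.1).toReal := ENNReal.toReal_nonneg
  rw [abs_le]
  constructor <;> linarith

lemma poly_tail' (a c : ℝ) (ha : 0 < a) (hc : 0 ≤ c) :
    1024 * a^3 * (3*a+c)^2 ≤ 2 * π * (2*a+c) * (6*a+c)^4 := by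
  have hpi : (3.14:ℝ) ≤ π := by linarith [Real.pi_gt_d2]
  have h1 : (6.28:ℝ) * (2*a+c) * (6*a+c)^4 ≤ 2 * π * (2*a+c) * (6*a+c)^4 := by
    have : (0:ℝ) ≤ (2*a+c) * (6*a+c)^4 := by positivity
    nlinarith
  refine le_trans ?_ h1
  nlinarith [pow_pos ha 5, mul_nonneg hc (pow_pos ha 4).le,
    mul_nonneg (mul_nonneg hc hc) (pow_pos ha 3).le,
    mul_nonneg (mul_nonneg (mul_nonneg hc hc) hc) (pow_pos ha 2).le,
    mul_nonneg (mul_nonneg (mul_nonneg hc hc) (mul_nonneg hc hc)) ha.le,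
    mul_nonneg (mul_nonneg (mul_nonneg hc hc) (mul_nonneg hc hc)) hc]

lemma poly_tail (a b : ℝ) (ha : 0 < a) (h2 : 2*a ≤ b) :
    1024 * a^3 * (a+b)^2 ≤ 2 * π * b * (4*a+b)^4 := by
  have h := poly_tail' a (b - 2*a) ha (by linarith)
  calc 1024*a^3*(a+b)^2 = 1024*a^3*(3*a+(b-2*a))^2 := by ring
  _ ≤ 2*π*(2*a+(b-2*a))*(6*a+(b-2*a))^4 := h
  _ = 2*π*b*(4*a+b)^4 := by ring

lemma poly_small (a b : ℝ) (ha : 0 < a) (hb : 0 ≤ b) (h2 : b ≤ 2*a) :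
    72 * π * a^3 * b ≤ 4 * (a+b)^2 * (6*a-b)^2 := by
  have hpi : π ≤ 3.15 := by linarith [Real.pi_lt_d2]
  have h1 : 72 * π * a^3 * b ≤ 226.8 * a^3 * b := by
    nlinarith [mul_nonneg (mul_nonneg (mul_nonneg ha.le ha.le) ha.le) hb]
  nlinarith [sq_nonneg (b - a), sq_nonneg (b - 2*a), mul_nonneg (mul_nonneg ha.le ha.le) hb,
    mul_nonneg (mul_nonneg ha.le hb) hb, mul_nonneg (mul_nonneg hb hb) hb,
    mul_nonneg (mul_nonneg ha.le ha.le) (sub_nonneg.2 h2),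
    mul_nonneg (mul_nonneg ha.le hb) (sub_nonneg.2 h2),
    mul_nonneg (mul_nonneg hb hb) (sub_nonneg.2 h2)]

variable {v : NNReal}

lemma toReal_gauss (m : ℝ) (hv : v ≠ 0) (s : Set ℝ) :
    (gaussianReal m v s).toReal = ∫ x in s, gaussianPDFReal m v x := by
  rw [gaussianReal_apply_eq_integral m hv,
    ENNReal.toReal_ofReal (integral_nonneg fun x => gaussianPDFReal_nonneg m v x)]

lemma gauss_shift (m : ℝ) (s : Set ℝ) (hs : MeasurableSet s) :
    gaussianReal m v s = gaussianReal 0 v ((fun x => x + m) ⁻¹' s) := by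
  conv_lhs => rw [← (show (gaussianReal 0 v).map (· + m) = gaussianReal m v by
    rw [gaussianReal_map_add_const]; simp)]
  rw [Measure.map_apply (measurable_add_const m) hs]

lemma pdf0_eq (hv : v ≠ 0) (x : ℝ) :
    gaussianPDFReal 0 v x = (Real.sqrt (2*π*v))⁻¹ * rexp (-x^2/(2*v)) := by
  simp [gaussianPDFReal]

lemma int_xexp (hv : 0 < v) : Integrable (fun x : ℝ => x * rexp (-x^2/(2*(v:ℝ)))) := by
  have hv' : (0:ℝ) < v := hv
  have h := integrable_mul_exp_neg_mul_sq (b := (2*(v:ℝ))⁻¹) (by positivity)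
  refine h.congr ?_
  filter_upwards with x
  congr 1
  field_simp

lemma ftc_tail (hv : 0 < v) (h : ℝ) :
    ∫ x in Ioi h, x * rexp (-x^2/(2*(v:ℝ))) = (v:ℝ) * rexp (-h^2/(2*(v:ℝ))) := by
  have hv' : (0:ℝ) < v := hv
  have key := integral_Ioi_of_hasDerivAt_of_tendsto'
    (f := fun x : ℝ => -(v:ℝ) * rexp (-x^2/(2*(v:ℝ))))
    (f' := fun x : ℝ => x * rexp (-x^2/(2*(v:ℝ)))) (a := h) (m := 0)
    ?_ ((int_xexp hv).integrableOn) ?_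
  · rw [key]; ring
  · intro x _
    have d1 : HasDerivAt (fun x : ℝ => -x^2/(2*(v:ℝ))) (-x/(v:ℝ)) x := by
      have hp : HasDerivAt (fun x : ℝ => x^2) (2*x) x := by
        simpa using hasDerivAt_pow 2 x
      have := (hp.neg).div_const (2*(v:ℝ))
      exact this.congr_deriv (by ring)
    have d2 := (d1.exp).const_mul (-(v:ℝ))
    exact d2.congr_deriv (by field_simp)
  · have t1 : Tendsto (fun x : ℝ => -x^2/(2*(v:ℝ))) atTop atBot := by
      apply Filter.Tendsto.atBot_div_const (by positivity)
      apply tendsto_neg_atBot_iff.mpr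
      exact tendsto_pow_atTop (two_ne_zero)
    have t2 := (Real.tendsto_exp_atBot.comp t1).const_mul (-(v:ℝ))
    simpa using t2

lemma tail_le (hv : 0 < v) {h : ℝ} (hh : 0 < h) (h2 : 2 * (v:ℝ) ≤ h^2) :
    (gaussianReal 0 v (Ici h)).toReal ≤ (v:ℝ) / (2 * ((v:ℝ) + h^2)) := by
  have hv' : (0:ℝ) < v := hv
  have hvne : v ≠ 0 := hv.ne'
  set S := Real.sqrt (2*π*(v:ℝ)) with hSdef
  have hS : 0 < S := Real.sqrt_pos.mpr (by positivity)
  have hS2 : S^2 = 2*π*(v:ℝ) := Real.sq_sqrt (by positivity)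
  rw [toReal_gauss 0 hvne]
  have hint2 : Integrable (fun x : ℝ => (x/h) * gaussianPDFReal 0 v x) := by
    have heq : (fun x : ℝ => (x/h) * gaussianPDFReal 0 v x)
        = fun x => (h⁻¹ * S⁻¹) * (x * rexp (-x^2/(2*(v:ℝ)))) := by
      funext x; rw [pdf0_eq hvne]; ring
    rw [heq]
    exact (int_xexp hv).const_mul _
  have step1 : ∫ x in Ici h, gaussianPDFReal 0 v x
      ≤ ∫ x in Ici h, (x/h) * gaussianPDFReal 0 v x := by
    refine setIntegral_mono_on ((integrable_gaussianPDFReal 0 v).integrableOn)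
      (hint2.integrableOn) measurableSet_Ici ?_
    intro x hx
    have h1 : (1:ℝ) ≤ x/h := (one_le_div hh).mpr hx
    have h0 := gaussianPDFReal_nonneg 0 v x
    nlinarith
  have step2 : ∫ x in Ici h, (x/h) * gaussianPDFReal 0 v x
      = (h⁻¹ * S⁻¹) * ((v:ℝ) * rexp (-h^2/(2*(v:ℝ)))) := by
    rw [integral_Ici_eq_integral_Ioi, ← ftc_tail hv h, ← integral_const_mul]
    refine setIntegral_congr_fun measurableSet_Ioi ?_
    intro x _
    show x/h * gaussianPDFReal 0 v x = h⁻¹ * S⁻¹ * (x * rexp (-x^2/(2*(v:ℝ))))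
    rw [pdf0_eq hvne]
    ring
  refine (step1.trans (le_of_eq step2)).trans ?_
  have hexp : rexp (-h^2/(2*(v:ℝ))) ≤ 16*(v:ℝ)^2 / (4*(v:ℝ)+h^2)^2 := by
    have e1 : (4*(v:ℝ)+h^2)^2 / (16*(v:ℝ)^2) ≤ rexp (h^2/(2*(v:ℝ))) := by
      have a1 := Real.add_one_le_exp (h^2/(4*(v:ℝ)))
      have a2 : (0:ℝ) ≤ 1 + h^2/(4*(v:ℝ)) := by positivity
      have e2 : (4*(v:ℝ)+h^2)^2 / (16*(v:ℝ)^2) = (1 + h^2/(4*(v:ℝ)))^2 := by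
        field_simp; ring
      rw [e2]
      calc (1 + h^2/(4*(v:ℝ)))^2 ≤ (rexp (h^2/(4*(v:ℝ))))^2 := by
            apply pow_le_pow_left₀ a2 (by linarith)
        _ = rexp (h^2/(2*(v:ℝ))) := by
            rw [sq, ← Real.exp_add]; congr 1; ring
    have e3 : rexp (-h^2/(2*(v:ℝ))) = (rexp (h^2/(2*(v:ℝ))))⁻¹ := by
      rw [← Real.exp_neg]; congr 1; ring
    have e4 : (0:ℝ) < (4*(v:ℝ)+h^2)^2 / (16*(v:ℝ)^2) := by positivity
    calc rexp (-h^2/(2*(v:ℝ))) = (rexp (h^2/(2*(v:ℝ))))⁻¹ := e3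
      _ ≤ ((4*(v:ℝ)+h^2)^2 / (16*(v:ℝ)^2))⁻¹ := by
          apply inv_anti₀ e4 e1
      _ = 16*(v:ℝ)^2 / (4*(v:ℝ)+h^2)^2 := by rw [inv_div]
  have key2 : 32*(v:ℝ)^2*((v:ℝ)+h^2) ≤ h*S*(4*(v:ℝ)+h^2)^2 := by
    have hp := poly_tail (v:ℝ) (h^2) hv' h2
    have hsq : (32*(v:ℝ)^2*((v:ℝ)+h^2))^2 ≤ (h*S*(4*(v:ℝ)+h^2)^2)^2 := by
      calc (32*(v:ℝ)^2*((v:ℝ)+h^2))^2 = (v:ℝ) * (1024*(v:ℝ)^3*((v:ℝ)+h^2)^2) := by ring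
        _ ≤ (v:ℝ) * (2*π*h^2*(4*(v:ℝ)+h^2)^4) := by
            apply mul_le_mul_of_nonneg_left hp hv'.le
        _ = (h*S*(4*(v:ℝ)+h^2)^2)^2 := by
            have : (h*S*(4*(v:ℝ)+h^2)^2)^2 = h^2 * S^2 * ((4*(v:ℝ)+h^2)^2)^2 := by ring
            rw [this, hS2]; ring
    nlinarith [hsq, mul_pos (mul_pos hh hS) (pow_pos (by positivity : (0:ℝ) < 4*(v:ℝ)+h^2) 2),
      mul_pos (mul_pos (by positivity : (0:ℝ) < 32*(v:ℝ)^2)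
        (by positivity : (0:ℝ) < (v:ℝ)+h^2)) (one_pos)]
  calc h⁻¹ * S⁻¹ * ((v:ℝ) * rexp (-h^2/(2*(v:ℝ))))
      ≤ h⁻¹ * S⁻¹ * ((v:ℝ) * (16*(v:ℝ)^2 / (4*(v:ℝ)+h^2)^2)) := by
        apply mul_le_mul_of_nonneg_left (mul_le_mul_of_nonneg_left hexp hv'.le) (by positivity)
    _ = (16*(v:ℝ)^3)/(h*S*(4*(v:ℝ)+h^2)^2) := by field_simp
    _ ≤ (v:ℝ) / (2*((v:ℝ)+h^2)) := by
        rw [div_le_div_iff₀ (by positivity) (by positivity)]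
        nlinarith [key2, hv']

lemma tail_le' (hv : 0 < v) {h : ℝ} (hh : 0 < h) (h2 : 2 * (v:ℝ) ≤ h^2) :
    (gaussianReal 0 v (Iic (-h))).toReal ≤ (v:ℝ) / (2 * ((v:ℝ) + h^2)) := by
  have hmap : (gaussianReal 0 v).map (fun x : ℝ => (-1) * x) = gaussianReal 0 v := by
    rw [gaussianReal_map_const_mul (-1 : ℝ)]
    have h1 : (⟨(-1:ℝ)^2, sq_nonneg _⟩ : NNReal) = 1 := by ext; norm_num
    congr 1
    · norm_num
    · ext; simp
  have hset : gaussianReal 0 v (Iic (-h)) = gaussianReal 0 v (Ici h) := by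
    conv_lhs => rw [← hmap]
    rw [Measure.map_apply (by fun_prop) measurableSet_Iic]
    congr 1
    ext x
    simp only [mem_preimage, mem_Iic, mem_Ici]
    constructor <;> intro hx <;> linarith
  rw [hset]
  exact tail_le hv hh h2

lemma small_branch (hv : 0 < v) {h : ℝ} (hh : 0 < h) (h2 : h^2 ≤ 2*(v:ℝ)) :
    h^2/((v:ℝ)+h^2) ≤ ∫ y in (-h)..h, gaussianPDFReal 0 v y := by
  have hv' : (0:ℝ) < v := hv
  have hvne : v ≠ 0 := hv.ne'
  set S := Real.sqrt (2*π*(v:ℝ)) with hSdef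
  have hS : 0 < S := Real.sqrt_pos.mpr (by positivity)
  have hS2 : S^2 = 2*π*(v:ℝ) := Real.sq_sqrt (by positivity)
  have hI : ∀ a b : ℝ, IntervalIntegrable (gaussianPDFReal 0 v) volume a b :=
    fun a b => (integrable_gaussianPDFReal 0 v).intervalIntegrable
  have hsplit : ∫ y in (-h)..h, gaussianPDFReal 0 v y
      = (∫ y in (-h)..(0:ℝ), gaussianPDFReal 0 v y) + ∫ y in (0:ℝ)..h, gaussianPDFReal 0 v y :=
    (intervalIntegral.integral_add_adjacent_intervals (hI _ _) (hI _ _)).symm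
  have heven : ∫ y in (-h)..(0:ℝ), gaussianPDFReal 0 v y
      = ∫ y in (0:ℝ)..h, gaussianPDFReal 0 v y := by
    have hc := intervalIntegral.integral_comp_neg (a := (0:ℝ)) (b := h)
      (fun x => gaussianPDFReal 0 v x)
    simp only [neg_zero] at hc
    rw [← hc]
    apply intervalIntegral.integral_congr
    intro x _
    simp [pdf0_eq hvne]
  have hmono : ∫ y in (0:ℝ)..h, S⁻¹ * (1 - y^2/(2*(v:ℝ)))
      ≤ ∫ y in (0:ℝ)..h, gaussianPDFReal 0 v y := by
    refine intervalIntegral.integral_mono_on hh.le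
      (Continuous.intervalIntegrable (by fun_prop) _ _) (hI 0 h) ?_
    intro y _
    rw [pdf0_eq hvne]
    apply mul_le_mul_of_nonneg_left ?_ (by positivity)
    have := Real.add_one_le_exp (-y^2/(2*(v:ℝ)))
    have e : 1 - y^2/(2*(v:ℝ)) = -y^2/(2*(v:ℝ)) + 1 := by ring
    rw [e]
    linarith
  have hcomp : ∫ y in (0:ℝ)..h, S⁻¹ * (1 - y^2/(2*(v:ℝ))) = S⁻¹ * (h - h^3/(6*(v:ℝ))) := by
    rw [intervalIntegral.integral_const_mul]
    congr 1
    rw [intervalIntegral.integral_sub (intervalIntegrable_const)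
      (Continuous.intervalIntegrable (by fun_prop) _ _)]
    simp only [intervalIntegral.integral_div, integral_pow, intervalIntegral.integral_const,
      smul_eq_mul, mul_one, sub_zero]
    norm_num
    field_simp
    ring
  have key4 : 3*(v:ℝ)*h*S ≤ (6*(v:ℝ)-h^2)*((v:ℝ)+h^2) := by
    have hp := poly_small (v:ℝ) (h^2) hv' (sq_nonneg h) h2
    have hq : (3*(v:ℝ)*h*S)^2 ≤ ((6*(v:ℝ)-h^2)*((v:ℝ)+h^2))^2 := by
      have e : (3*(v:ℝ)*h*S)^2 = 9*(v:ℝ)^2*h^2*S^2 := by ring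
      rw [e, hS2]
      nlinarith [hp]
    nlinarith [hq, mul_pos (by linarith : (0:ℝ) < 6*(v:ℝ)-h^2)
      (by positivity : (0:ℝ) < (v:ℝ)+h^2),
      mul_pos (mul_pos (by positivity : (0:ℝ) < 3*(v:ℝ)) hh) hS]
  have key3 : h^2/((v:ℝ)+h^2) ≤ 2*(S⁻¹*(h - h^3/(6*(v:ℝ)))) := by
    have expand : 2*(S⁻¹*(h - h^3/(6*(v:ℝ)))) = (h*(6*(v:ℝ)-h^2))/(3*(v:ℝ)*S) := by
      field_simp
      ring
    rw [expand, div_le_div_iff₀ (by positivity) (by positivity)]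
    nlinarith [mul_le_mul_of_nonneg_left key4 hh.le]
  rw [hsplit, heven]
  rw [hcomp] at hmono
  linarith

lemma half (μP μQ : ℝ) (v : NNReal) (hv : 0 < v) (hlt : μQ < μP) :
    (μP - μQ) ^ 2 / (4 * (v : ℝ) + (μP - μQ) ^ 2)
      ≤ tvDist (gaussianReal μP v) (gaussianReal μQ v) := by
  have hvne : v ≠ 0 := hv.ne'
  set h := (μP - μQ)/2 with hhdef
  have hh : 0 < h := by rw [hhdef]; linarith
  set c := μQ + h with hcdef
  set G0 := gaussianReal 0 v with hG0
  have hfin : ∀ s : Set ℝ, G0 s ≠ ⊤ := fun s => measure_ne_top _ _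
  have hP : gaussianReal μP v (Ici c) = G0 (Ici (-h)) := by
    rw [gauss_shift μP (Ici c) measurableSet_Ici]
    congr 1
    ext x
    simp only [mem_preimage, mem_Ici]
    constructor <;> intro hx <;> linarith
  have hQ : gaussianReal μQ v (Ici c) = G0 (Ici h) := by
    rw [gauss_shift μQ (Ici c) measurableSet_Ici]
    congr 1
    ext x
    simp only [mem_preimage, mem_Ici]
    constructor <;> intro hx <;> linarith
  have hdec : G0 (Ici (-h)) = G0 (Ico (-h) h) + G0 (Ici h) := by
    have hdisj : Disjoint (Ico (-h) h) (Ici h) := by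
      rw [Set.disjoint_left]; rintro x ⟨_, h1⟩ h2; exact absurd h2 (not_le.mpr h1)
    rw [← Set.Ico_union_Ici_eq_Ici (by linarith : -h ≤ h),
      measure_union hdisj measurableSet_Ici]
  have heps : (gaussianReal μP v (Ici c)).toReal - (gaussianReal μQ v (Ici c)).toReal
      = (G0 (Ico (-h) h)).toReal := by
    rw [hP, hQ, hdec, ENNReal.toReal_add (hfin _) (hfin _)]
    ring
  have hmain : h^2/((v:ℝ)+h^2) ≤ (G0 (Ico (-h) h)).toReal := by
    rcases le_or_gt (h^2) (2*(v:ℝ)) with hcase | hcase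
    · rw [hG0, toReal_gauss 0 hvne, integral_Ico_eq_integral_Ioo, ← integral_Ioc_eq_integral_Ioo,
        ← intervalIntegral.integral_of_le (by linarith : -h ≤ h)]
      exact small_branch hv hh hcase
    · have hd2 : G0 (Iio (-h)) + G0 (Ico (-h) h) = G0 (Iio h) := by
        have hdisj : Disjoint (Iio (-h)) (Ico (-h) h) := by
          rw [Set.disjoint_left]; rintro x h1 ⟨h2, _⟩; exact absurd h2 (not_le.mpr h1)
        rw [← measure_union hdisj measurableSet_Ico,
          Set.Iio_union_Ico_eq_Iio (by linarith : -h ≤ h)]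
      have hd3 : G0 (Iio h) + G0 (Ici h) = 1 := by
        have hdisj : Disjoint (Iio h) (Ici h) := by
          rw [Set.disjoint_left]; intro x h1 h2
          exact absurd (mem_Ici.mp h2) (not_le.mpr (mem_Iio.mp h1))
        rw [← measure_union hdisj measurableSet_Ici, Set.Iio_union_Ici]
        exact measure_univ
      have t1 : (G0 (Iio (-h))).toReal ≤ (v:ℝ)/(2*((v:ℝ)+h^2)) := by
        refine le_trans ?_ (tail_le' hv hh hcase.le)
        exact ENNReal.toReal_mono (hfin _) (measure_mono Iio_subset_Iic_self)
      have t2 : (G0 (Ici h)).toReal ≤ (v:ℝ)/(2*((v:ℝ)+h^2)) := tail_le hv hh hcase.le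
      have hsum : (G0 (Iio (-h))).toReal + (G0 (Ico (-h) h)).toReal + (G0 (Ici h)).toReal
          = 1 := by
        rw [← ENNReal.toReal_add (hfin _) (hfin _), hd2,
          ← ENNReal.toReal_add (hfin _) (hfin _), hd3]
        simp
      have target : h^2/((v:ℝ)+h^2) = 1 - 2*((v:ℝ)/(2*((v:ℝ)+h^2))) := by
        field_simp
        ring
      linarith
  have hbdd := tv_bdd (gaussianReal μP v) (gaussianReal μQ v)
  have hle := le_ciSup hbdd (⟨Ici c, measurableSet_Ici⟩ : {A : Set ℝ // MeasurableSet A})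
  have habs : h^2/((v:ℝ)+h^2)
      ≤ |(gaussianReal μP v (Ici c)).toReal - (gaussianReal μQ v (Ici c)).toReal| := by
    refine le_trans ?_ (le_abs_self _)
    rw [heps]
    exact hmain
  have hfinal : (μP - μQ)^2/(4*(v:ℝ)+(μP-μQ)^2) = h^2/((v:ℝ)+h^2) := by
    rw [hhdef]
    rw [div_eq_div_iff (by positivity) (by positivity)]
    ring
  rw [hfinal]
  exact habs.trans hle

end TVGaussAux

/-- **Moment lower bound on the TV distance of two equal-variance Gaussians**
(cf. Theorem 1 of Davies–Mikosch (2022) specialized to `σ_P = σ_Q = σ`):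
`‖N(μ_P, σ²) − N(μ_Q, σ²)‖_TV ≥ (μ_P − μ_Q)² / (4σ² + (μ_P − μ_Q)²)`. -/
theorem tv_gaussian_ge_moment_bound (μP μQ : ℝ) (v : NNReal) (hv : 0 < v)
    (hne : μP ≠ μQ) :
    (μP - μQ) ^ 2 / (4 * (v : ℝ) + (μP - μQ) ^ 2)
      ≤ tvDist (gaussianReal μP v) (gaussianReal μQ v) := by
  rcases hne.lt_or_gt with hlt | hlt
  · have hmain := TVGaussAux.half μQ μP v hv hlt
    have e : (μP - μQ)^2 = (μQ - μP)^2 := by ring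
    rw [TVGaussAux.tv_symm, e]
    exact hmain
  · exact TVGaussAux.half μP μQ v hv hlt
end
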